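/- Let n > r ≥ 1, s ≥ 1, μ ≥ 2 and d with n − r < d ≤ n − 1 be integers, set b = d + 1 − n + r and ξ = max{n·b, μ}. If 2s(r+1) + r ≤ n, then 2·n·b·(2·n·μ)^{s(r+1)−1} < ξ^{n−r}. -/

import Mathlib

theorem two_mul_mul_pow_lt_pow {n b μ ξ t m : ℕ} (hn : 2 ≤ n) (hb : 2 ≤ b) (hnb : n * b ≤ ξ)
    (hμ : μ ≤ ξ) (ht : 1 ≤ t) (hm : 2 * t ≤ m) :
    2 * n * b * (2 * n * μ) ^ (t - 1) < ξ ^ m := by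
  have h4 : 4 ≤ n * b := by nlinarith
  have hfirst : 2 * n * b < ξ ^ 2 :=
    calc 2 * n * b = 2 * (n * b) := by ring
      _ < (n * b) * (n * b) := by nlinarith
      _ ≤ ξ ^ 2 := by rw [sq]; exact Nat.mul_le_mul hnb hnb
  have hsecond : 2 * n * μ ≤ ξ ^ 2 :=
    calc 2 * n * μ ≤ (n * b) * μ := Nat.mul_le_mul_right _ (by nlinarith)
      _ ≤ ξ ^ 2 := by rw [sq]; exact Nat.mul_le_mul hnb hμ
  calc 2 * n * b * (2 * n * μ) ^ (t - 1)
      < ξ ^ 2 * (ξ ^ 2) ^ (t - 1) :=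
        Nat.mul_lt_mul_of_lt_of_le hfirst (Nat.pow_le_pow_left hsecond _)
          (pow_pos (pow_pos (by omega) 2) _)
    _ = ξ ^ (2 + 2 * (t - 1)) := by rw [← pow_mul, ← pow_add]
    _ ≤ ξ ^ m := Nat.pow_le_pow_right (by omega) (by omega)

theorem stmt_11_general (n r s μ d : ℕ) (hs : 1 ≤ s)
    (hd1 : n - r < d)
    (b ξ : ℕ) (hb : b = d + 1 - (n - r)) (hξ : ξ = max (n * b) μ)
    (hcond : 2 * s * (r + 1) + r ≤ n) :
    2 * n * b * (2 * n * μ) ^ (s * (r + 1) - 1) < ξ ^ (n - r) := by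
  have ht : 1 ≤ s * (r + 1) := Nat.one_le_iff_ne_zero.mpr (by positivity)
  have hcond' : 2 * (s * (r + 1)) + r ≤ n := by rwa [← mul_assoc]
  subst hξ
  exact two_mul_mul_pow_lt_pow (by omega) (by omega) (le_max_left _ _) (le_max_right _ _) ht
    (by omega)

theorem stmt_11 (n r s μ d : ℕ) (hr : 1 ≤ r) (hrn : r < n) (hs : 1 ≤ s) (hμ : 2 ≤ μ)
    (hd1 : n - r < d) (hd2 : d ≤ n - 1)
    (b ξ : ℕ) (hb : b = d + 1 - (n - r)) (hξ : ξ = max (n * b) μ)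
    (hcond : 2 * s * (r + 1) + r ≤ n) :
    2 * n * b * (2 * n * μ) ^ (s * (r + 1) - 1) < ξ ^ (n - r) :=
  stmt_11_general n r s μ d hs hd1 b ξ hb hξ hcond
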